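/- arXiv:1208.5894 — 4 statements merged into one kernel-verified Lean document; each statement's English description precedes it below -/
import Mathlib

section
/- Let A be a nonnegative matrix such that Av = 0 for some v. Then the set of rows having a positive entry in some column of I⁻(v) equals the set of rows having a positive entry in some column of I⁺(v); i.e., N(I⁻(v)) = N(I⁺(v)), where N(S) = {i : A_{ij} > 0 for some j ∈ S}. -/
open Matrix

theorem Finset.exists_neg_iff_exists_pos_of_sum_eq_zero {ι M : Type*} [AddCommGroup M]
    [LinearOrder M] [IsOrderedAddMonoid M] {s : Finset ι} {f : ι → M}
    (h : ∑ i ∈ s, f i = 0) : (∃ i ∈ s, f i < 0) ↔ ∃ i ∈ s, 0 < f i := by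
  constructor
  · rintro ⟨i, hi, hfi⟩
    exact exists_pos_of_sum_zero_of_exists_nonzero f h ⟨i, hi, hfi.ne⟩
  · rintro ⟨i, hi, hfi⟩
    obtain ⟨j, hj, hfj⟩ := exists_pos_of_sum_zero_of_exists_nonzero (-f)
      (by simp [Finset.sum_neg_distrib, h]) ⟨i, hi, by simpa using hfi.ne'⟩
    exact ⟨j, hj, by simpa using hfj⟩

/-- for a nonnegative matrix `A` with `A v = 0`, the rows having a
positive entry in some column of `I⁻(v)` coincide with the rows having a
positive entry in some column of `I⁺(v)`. -/
theorem stmt1 {m n : ℕ} (A : Matrix (Fin m) (Fin n) ℝ)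
    (hA : ∀ i j, 0 ≤ A i j) (v : Fin n → ℝ) (hv : A.mulVec v = 0) :
    {i : Fin m | ∃ j, v j < 0 ∧ 0 < A i j} =
      {i : Fin m | ∃ j, 0 < v j ∧ 0 < A i j} := by
  ext i
  have hrow : ∑ j, A i j * v j = 0 := by simpa [mulVec, dotProduct] using congrFun hv i
  have hneg (j : Fin n) : A i j * v j < 0 ↔ v j < 0 ∧ 0 < A i j := by
    simp [mul_neg_iff, (hA i j).not_gt, and_comm]
  have hpos (j : Fin n) : 0 < A i j * v j ↔ 0 < v j ∧ 0 < A i j := by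
    simp [mul_pos_iff, (hA i j).not_gt, and_comm]
  simpa [hneg, hpos] using Finset.exists_neg_iff_exists_pos_of_sum_eq_zero hrow
end

section
/- Let A ∈ ℝ^{m×n} and let x* ∈ {0,1}ⁿ be a binary vector. Then x* is the unique solution of {x ∈ [0,1]ⁿ : Ax = Ax*} if and only if there is no nonzero v ∈ ker(A) with v_j ≤ 0 for all j ∈ supp(x*) and v_j ≥ 0 for all j ∉ supp(x*). -/
open Matrix Metric

/- Write `x = xstar + v`. Because `xstar` is binary, `x` lies in the box `[0,1]ⁿ` exactly when `v`
has the sign pattern of the statement and `|v_j| ≤ 1` for all `j`; so the solutions are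
`xstar + (C ∩ closedBall 0 1)`, where `C` is the cone of kernel vectors with that sign pattern.
A cone meets the unit ball only at `0` iff it is `{0}`. -/

theorem Set.eq_singleton_iff_of_mem_iff_sub_mem {G : Type*} [AddGroup G] {S T : Set G} {p : G}
    (h : ∀ x, x ∈ S ↔ x - p ∈ T) : S = {p} ↔ T = {0} := by
  simp only [Set.ext_iff, Set.mem_singleton_iff, h]
  constructor
  · intro hS v
    simpa using hS (v + p)
  · intro hT x
    rw [hT, sub_eq_zero]

theorem inter_closedBall_zero_eq_singleton_iff {E : Type*} [NormedAddCommGroup E]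
    [NormedSpace ℝ E] {C : Set E} (hC : ∀ c : ℝ, 0 < c → ∀ v ∈ C, c • v ∈ C) :
    C ∩ closedBall 0 1 = {0} ↔ C = {0} := by
  constructor
  · intro h
    have h0 : (0 : E) ∈ C ∩ closedBall 0 1 := h ▸ rfl
    refine Set.eq_singleton_iff_unique_mem.2 ⟨h0.1, fun v hv => ?_⟩
    by_contra hv0
    have hpos : 0 < ‖v‖ := norm_pos_iff.2 hv0
    have hunit : ‖v‖⁻¹ • v ∈ C ∩ closedBall 0 1 :=
      ⟨hC _ (inv_pos.2 hpos) v hv, by simp [norm_smul, hpos.ne']⟩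
    rw [h, Set.mem_singleton_iff, smul_eq_zero] at hunit
    exact hunit.elim (inv_ne_zero hpos.ne') hv0
  · rintro rfl
    simp

theorem mem_unitInterval_iff_of_binary {a b : ℝ} (hb : b = 0 ∨ b = 1) :
    (0 ≤ a ∧ a ≤ 1) ↔ ((b ≠ 0 → a - b ≤ 0) ∧ (b = 0 → 0 ≤ a - b)) ∧ |a - b| ≤ 1 := by
  rcases hb with rfl | rfl <;> simp only [abs_le] <;> grind

/-- a binary vector `x*` is the unique solution of
`{x ∈ [0,1]ⁿ : Ax = Ax*}` iff there is no nonzero `v ∈ ker A` with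
`v_j ≤ 0` on `supp(x*)` and `v_j ≥ 0` off `supp(x*)`. -/
theorem stmt3 {m n : ℕ} (A : Matrix (Fin m) (Fin n) ℝ)
    (xstar : Fin n → ℝ) (hx : ∀ j, xstar j = 0 ∨ xstar j = 1) :
    {x : Fin n → ℝ | A.mulVec x = A.mulVec xstar ∧ ∀ j, 0 ≤ x j ∧ x j ≤ 1}
        = {xstar} ↔
      ¬ ∃ v : Fin n → ℝ, v ≠ 0 ∧ A.mulVec v = 0 ∧
        (∀ j, xstar j ≠ 0 → v j ≤ 0) ∧ (∀ j, xstar j = 0 → 0 ≤ v j) := by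
  set S := {x : Fin n → ℝ | A *ᵥ x = A *ᵥ xstar ∧ ∀ j, 0 ≤ x j ∧ x j ≤ 1}
  set C : Set (Fin n → ℝ) := {v | A *ᵥ v = 0 ∧
    (∀ j, xstar j ≠ 0 → v j ≤ 0) ∧ (∀ j, xstar j = 0 → 0 ≤ v j)}
  have hmem : ∀ x, x ∈ S ↔ x - xstar ∈ C ∩ closedBall 0 1 := fun x => by
    rw [Set.mem_inter_iff, mem_closedBall_zero_iff, pi_norm_le_iff_of_nonneg zero_le_one]
    simp only [S, C, Set.mem_ofPred_eq, Real.norm_eq_abs, mulVec_sub, sub_eq_zero, Pi.sub_apply,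
      fun j => mem_unitInterval_iff_of_binary (a := x j) (hx j)]
    simp only [forall_and, and_assoc]
  have hcone : ∀ c : ℝ, 0 < c → ∀ v ∈ C, c • v ∈ C := by
    rintro c hc v ⟨hker, hneg, hpos⟩
    refine ⟨by rw [mulVec_smul, hker, smul_zero], fun j hj => ?_, fun j hj => ?_⟩
    · exact mul_nonpos_of_nonneg_of_nonpos hc.le (hneg j hj)
    · exact mul_nonneg hc.le (hpos j hj)
  have hC0 : (0 : Fin n → ℝ) ∈ C := by simp [C]
  rw [Set.eq_singleton_iff_of_mem_iff_sub_mem hmem, inter_closedBall_zero_eq_singleton_iff hcone,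
    Set.eq_singleton_iff_unique_mem]
  rw [and_iff_right hC0]
  exact ⟨fun h ⟨v, hv0, hv⟩ => hv0 (h v hv), fun h v hv => by_contra fun hv0 => h ⟨v, hv0, hv⟩⟩
end

section
/- Let A be a nonnegative matrix with exactly ℓ nonzero entries in each column, and let r₀ be its complete (Kruskal) rank, i.e., the maximal integer such that every set of r₀ columns of A is linearly independent. Then every nonzero null space vector v of A satisfies |I⁻(v)| ≥ r₀/ℓ. -/
/-
Let `N = I⁻(v)` and let `R` be the set of rows in which some column indexed by `N` is positive,
so `|R| ≤ ℓ |N|`. Every column `j` in the support of `v` vanishes outside `R`: for `v j < 0` by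
definition, and for `v j > 0` because a row `i` with `A i j > 0` must contain a negative term
`A i j' v j' < 0` to satisfy `(A v)_i = 0`. The support columns are linearly dependent, so there
are more than `r₀` of them; any `r₀` of them are independent vectors supported in `R`,
whence `r₀ ≤ |R| ≤ ℓ |N|`.
-/

open Matrix

/-- Every set of `r` columns of `A` is linearly independent. -/
def colsIndep {m n : ℕ} (A : Matrix (Fin m) (Fin n) ℝ) (r : ℕ) : Prop :=
  ∀ T : Finset (Fin n), T.card = r →
    LinearIndependent ℝ (fun j : T => (Aᵀ (j : Fin n)))

open Finset

lemma colsIndep.linearIndepOn_of_card_le {m n r : ℕ} {A : Matrix (Fin m) (Fin n) ℝ}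
    (hind : colsIndep A r) (hrn : r ≤ n) {S : Finset (Fin n)} (hS : #S ≤ r) :
    LinearIndepOn ℝ Aᵀ (S : Set (Fin n)) := by
  obtain ⟨T, hST, -, hT⟩ := exists_subsuperset_card_eq (subset_univ S) hS (by simpa using hrn)
  exact LinearIndepOn.mono (hind T hT : LinearIndepOn ℝ Aᵀ (T : Set (Fin n))) (coe_subset.2 hST)

lemma exists_neg_of_dotProduct_eq_zero {ι R : Type*} [Fintype ι] [Ring R] [LinearOrder R]
    [IsStrictOrderedRing R] {a v : ι → R} (ha : 0 ≤ a)
    (hav : a ⬝ᵥ v = 0) {j : ι} (haj : 0 < a j) (hvj : v j ≠ 0) :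
    ∃ j', v j' < 0 ∧ 0 < a j' := by
  by_contra! h
  have hterm : ∀ k, 0 ≤ a k * v k := fun k =>
    (le_or_gt 0 (v k)).elim (mul_nonneg (ha k)) fun hk => by
      rw [le_antisymm (h k hk) (ha k), zero_mul]
  have hvj_pos : 0 < v j := (lt_or_gt_of_ne hvj).resolve_left fun hneg => (h j hneg).not_gt haj
  have : 0 < a ⬝ᵥ v :=
    sum_pos' (fun k _ => hterm k) ⟨j, mem_univ j, mul_pos haj hvj_pos⟩
  exact this.ne' hav

lemma LinearIndepOn.card_le_card_of_vanishing_off {ι κ K : Type*} [Field K] {f : ι → κ → K}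
    {S : Finset ι} (hf : LinearIndepOn K f (S : Set ι)) (R : Finset κ)
    (hR : ∀ i ∈ S, ∀ k ∉ R, f i k = 0) : #S ≤ #R := by
  have hres : LinearIndependent K fun (i : S) (k : R) => f i k := by
    rw [Fintype.linearIndependent_iff]
    intro g hg
    refine Fintype.linearIndependent_iff.1 hf g (funext fun k => ?_)
    by_cases hk : k ∈ R
    · simpa using congrFun hg ⟨k, hk⟩
    · simp [hR _ (coe_mem _) k hk]
  simpa using hres.fintype_card_le_finrank

lemma not_linearIndepOn_support_of_mulVec_eq_zero {m n R : Type*} [Fintype n] [CommRing R]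
    [DecidableEq R] {A : Matrix m n R} {v : n → R} (hv : A *ᵥ v = 0) (hv0 : v ≠ 0) :
    ¬LinearIndepOn R Aᵀ (({j | v j ≠ 0} : Finset n) : Set n) := by
  refine not_linearIndepOn_finset_iff.2 ⟨v, ?_, ?_⟩
  · refine (sum_filter_of_ne fun j _ hj => left_ne_zero_of_smul hj).trans ?_
    simpa [mulVec_eq_sum] using hv
  · obtain ⟨j, hj⟩ := Function.ne_iff.1 hv0
    exact ⟨j, by simpa using hj, hj⟩

theorem le_card_rows_meeting_neg {m n r : ℕ} {A : Matrix (Fin m) (Fin n) ℝ} (hA : ∀ i j, 0 ≤ A i j)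
    (hind : colsIndep A r) (hrn : r ≤ n) {v : Fin n → ℝ} (hv : A *ᵥ v = 0) (hv0 : v ≠ 0) :
    r ≤ #(({j | v j < 0} : Finset (Fin n)).biUnion fun j => {i | 0 < A i j}) := by
  set S : Finset (Fin n) := {j | v j ≠ 0}
  set R := ({j | v j < 0} : Finset (Fin n)).biUnion fun j => {i | 0 < A i j}
  have hvanish : ∀ j ∈ S, ∀ i ∉ R, A i j = 0 := by
    intro j hj i hi
    refine ((hA i j).lt_or_eq.resolve_left fun hij => hi ?_).symm
    obtain ⟨j', hj', hij'⟩ := exists_neg_of_dotProduct_eq_zero (hA i) (congrFun hv i) hij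
      (mem_filter.1 hj).2
    simpa [R] using ⟨j', hj', hij'⟩
  have hrS : r < #S := lt_of_not_ge fun hS =>
    not_linearIndepOn_support_of_mulVec_eq_zero hv hv0 (hind.linearIndepOn_of_card_le hrn hS)
  obtain ⟨S', hS'S, hS'⟩ := exists_subset_card_eq hrS.le
  rw [← hS']
  exact (hind.linearIndepOn_of_card_le hrn hS'.le).card_le_card_of_vanishing_off R
    fun j hj => hvanish j (hS'S hj)

/-- if `A ≥ 0` has exactly `ℓ` nonzero entries in each column and
complete (Kruskal) rank `r₀`, then every nonzero null space vector `v`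
satisfies `|I⁻(v)| ≥ r₀ / ℓ`. -/
theorem stmt5 {m n ℓ r₀ : ℕ} (A : Matrix (Fin m) (Fin n) ℝ)
    (hA : ∀ i j, 0 ≤ A i j)
    (hdeg : ∀ j : Fin n, (Finset.univ.filter (fun i => 0 < A i j)).card = ℓ)
    (hr : IsGreatest {r : ℕ | r ≤ n ∧ colsIndep A r} r₀)
    (v : Fin n → ℝ) (hv : A.mulVec v = 0) (hv0 : v ≠ 0) :
    (r₀ : ℝ) / ℓ ≤ (Finset.univ.filter (fun i => v i < 0)).card := by
  obtain ⟨⟨hr₀n, hind⟩, -⟩ := hr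
  have hkey : r₀ ≤ #({i | v i < 0} : Finset (Fin n)) * ℓ :=
    calc r₀ ≤ _ := le_card_rows_meeting_neg hA hind hr₀n hv hv0
      _ ≤ ∑ j ∈ {i | v i < 0}, #({i | 0 < A i j} : Finset (Fin m)) := card_biUnion_le
      _ = _ := by simp [hdeg]
  exact div_le_of_le_mul₀ (Nat.cast_nonneg _) (Nat.cast_nonneg _) (by exact_mod_cast hkey)
end

section
/- For d ≥ 3 and D ∈ {2,3}, every (2^{D−1} − 1)-sparse nonnegative vector x* is the unique element of {x : A_d^D x = A_d^D x*, x ≥ 0}. -/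
/-!
If `A x = A x*` with `x ≥ 0`, then `x - x*` lies in the null space of `A` and its negative entries
lie in the support of `x*`. So it suffices that every nonzero null vector has at least `2^{D-1}`
negative entries. Null vectors of `A_d^D` are arrays all of whose line sums vanish, and in such an
array a positive entry is balanced by a negative entry on every line through it.
-/

open Matrix Kronecker

/-- The matrix `M = [−1ᵀ_{d−1}; I_{d−1}] ∈ ℝ^{d×(d−1)}`. -/
def Mmat (d : ℕ) : Matrix (Fin d) (Fin (d - 1)) ℝ :=
  Matrix.of fun i j => if (i : ℕ) = 0 then -1 else if (i : ℕ) = (j : ℕ) + 1 then 1 else 0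

/-- The all-ones row vector `1_dᵀ ∈ ℝ^{1×d}`. -/
def onesRow (d : ℕ) : Matrix (Fin 1) (Fin d) ℝ := Matrix.of fun _ _ => 1

/-- 2D tomography matrix `A_d^2 = [I_d ⊗ 1_dᵀ ; 1_dᵀ ⊗ I_d]`. -/
def A2 (d : ℕ) : Matrix ((Fin d × Fin 1) ⊕ (Fin 1 × Fin d)) (Fin d × Fin d) ℝ :=
  Matrix.fromRows ((1 : Matrix (Fin d) (Fin d) ℝ) ⊗ₖ onesRow d)
    (onesRow d ⊗ₖ (1 : Matrix (Fin d) (Fin d) ℝ))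

/-- 3D tomography matrix `A_d^3 = [1ᵀ⊗I⊗I ; I⊗1ᵀ⊗I ; I⊗I⊗1ᵀ]`. -/
def A3 (d : ℕ) :
    Matrix (((Fin 1 × Fin d) × Fin d) ⊕ (((Fin d × Fin 1) × Fin d) ⊕ ((Fin d × Fin d) × Fin 1)))
      ((Fin d × Fin d) × Fin d) ℝ :=
  Matrix.fromRows ((onesRow d ⊗ₖ (1 : Matrix (Fin d) (Fin d) ℝ)) ⊗ₖ (1 : Matrix (Fin d) (Fin d) ℝ))
    (Matrix.fromRows
      (((1 : Matrix (Fin d) (Fin d) ℝ) ⊗ₖ onesRow d) ⊗ₖ (1 : Matrix (Fin d) (Fin d) ℝ))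
      (((1 : Matrix (Fin d) (Fin d) ℝ) ⊗ₖ (1 : Matrix (Fin d) (Fin d) ℝ)) ⊗ₖ onesRow d))

/-- `B_d^2 = M ⊗ M`. -/
def B2 (d : ℕ) : Matrix (Fin d × Fin d) (Fin (d - 1) × Fin (d - 1)) ℝ :=
  Mmat d ⊗ₖ Mmat d

/-- `B_d^3 = M ⊗ M ⊗ M`. -/
def B3 (d : ℕ) :
    Matrix ((Fin d × Fin d) × Fin d) ((Fin (d - 1) × Fin (d - 1)) × Fin (d - 1)) ℝ :=
  (Mmat d ⊗ₖ Mmat d) ⊗ₖ Mmat d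

open Finset

lemma card_filter_eq_sum_card_filter_slices {α γ : Type*} [Fintype α] [Fintype γ]
    (P : α × γ → Prop) [DecidablePred P] :
    #{q | P q} = ∑ c, #{a | P (a, c)} := by
  simp only [card_filter]
  rw [Fintype.sum_prod_type, sum_comm]

section LineSums

variable {ι α β γ R : Type*} [AddCommGroup R] [LinearOrder R] [IsOrderedAddMonoid R]

lemma exists_neg_of_sum_eq_zero [Fintype ι] {f : ι → R} (hf : ∑ j, f j = 0) {i : ι}
    (hi : 0 < f i) : ∃ j, f j < 0 := by
  obtain ⟨j, -, hj⟩ := exists_pos_of_sum_zero_of_exists_nonzero (-f)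
    (by simp [hf]) ⟨i, mem_univ i, by simpa using hi.ne'⟩
  exact ⟨j, by simpa using hj⟩

lemma exists_pos_of_sum_eq_zero [Fintype ι] {f : ι → R} (hf : ∑ j, f j = 0) {i : ι}
    (hi : f i < 0) : ∃ j, 0 < f j := by
  obtain ⟨j, -, hj⟩ := exists_pos_of_sum_zero_of_exists_nonzero f hf ⟨i, mem_univ i, hi.ne⟩
  exact ⟨j, hj⟩

lemma exists_pos_of_fiber_sums_eq_zero [Fintype β] {h : α × β → R}
    (hsum : ∀ a, ∑ b, h (a, b) = 0) (hne : h ≠ 0) : ∃ p, 0 < h p := by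
  obtain ⟨⟨a, b⟩, hab⟩ := Function.ne_iff.1 hne
  obtain ⟨b', -, hb'⟩ :=
    exists_pos_of_sum_zero_of_exists_nonzero _ (hsum a) ⟨b, mem_univ b, hab⟩
  exact ⟨(a, b'), hb'⟩

lemma one_lt_card_neg_of_line_sums_eq_zero [Fintype α] [Fintype β] {h : α × β → R}
    (hcol : ∀ b, ∑ a, h (a, b) = 0) (hrow : ∀ a, ∑ b, h (a, b) = 0) {p : α × β}
    (hp : 0 < h p) : 1 < #{q | h q < 0} := by
  obtain ⟨i, j⟩ := p
  obtain ⟨a, ha⟩ := exists_neg_of_sum_eq_zero (hcol j) hp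
  obtain ⟨b, hb⟩ := exists_neg_of_sum_eq_zero (hrow i) hp
  have hai : a ≠ i := by rintro rfl; exact lt_asymm ha hp
  exact one_lt_card.2 ⟨(a, j), by simpa using ha, (i, b), by simpa using hb,
    fun h => hai (Prod.ext_iff.1 h).1⟩

/-- A positive entry at height `k` forces a negative entry at some height `c ≠ k` on its vertical
line; the horizontal slices `k` and `c` then both contain a positive entry, hence two negative
entries each. -/
lemma three_lt_card_neg_of_line_sums_eq_zero [Fintype α] [Fintype β] [Fintype γ]
    {h : (α × β) × γ → R}
    (h₁ : ∀ b c, ∑ a, h ((a, b), c) = 0) (h₂ : ∀ a c, ∑ b, h ((a, b), c) = 0)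
    (h₃ : ∀ a b, ∑ c, h ((a, b), c) = 0) {p : (α × β) × γ} (hp : 0 < h p) :
    3 < #{q | h q < 0} := by
  obtain ⟨⟨i, j⟩, k⟩ := p
  obtain ⟨c, hc⟩ := exists_neg_of_sum_eq_zero (h₃ i j) hp
  have hck : k ≠ c := by rintro rfl; exact lt_asymm hc hp
  obtain ⟨a, ha⟩ := exists_pos_of_sum_eq_zero (h₁ j c) hc
  have hk : 1 < #{q | h (q, k) < 0} :=
    one_lt_card_neg_of_line_sums_eq_zero (fun b => h₁ b k) (fun a => h₂ a k) (p := (i, j)) hp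
  have hc' : 1 < #{q | h (q, c) < 0} :=
    one_lt_card_neg_of_line_sums_eq_zero (fun b => h₁ b c) (fun a => h₂ a c) (p := (a, j)) ha
  calc 3 < #{q | h (q, k) < 0} + #{q | h (q, c) < 0} := by omega
    _ ≤ ∑ c, #{q | h (q, c) < 0} :=
      add_le_sum (f := fun c => #{q | h (q, c) < 0}) (fun _ _ => Nat.zero_le _)
        (mem_univ k) (mem_univ c) hck
    _ = #{q | h q < 0} := (card_filter_eq_sum_card_filter_slices (h · < 0)).symm

end LineSums

lemma setOf_mulVec_eq_and_nonneg_eq_singleton {m n R : Type*} [Fintype n] [Ring R]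
    [LinearOrder R] {A : Matrix m n R} {s : ℕ}
    (hA : ∀ h, A *ᵥ h = 0 → h ≠ 0 → s < #{i | h i < 0}) {xstar : n → R}
    (hx : 0 ≤ xstar) (hs : #{i | xstar i ≠ 0} ≤ s) :
    {x | A *ᵥ x = A *ᵥ xstar ∧ 0 ≤ x} = {xstar} := by
  refine Set.eq_singleton_iff_unique_mem.2 ⟨⟨rfl, hx⟩, ?_⟩
  rintro x ⟨hAx, hx0⟩
  by_contra hne
  have hneg : #{i | (x - xstar) i < 0} ≤ #{i | xstar i ≠ 0} := by
    refine card_le_card fun i => ?_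
    simp only [mem_filter, mem_univ, true_and, Pi.sub_apply]
    intro hi hzero
    rw [hzero, sub_zero] at hi
    exact (hx0 i).not_gt hi
  have := hA (x - xstar) (by rw [mulVec_sub, hAx, sub_self]) (sub_ne_zero.2 hne)
  omega

section Tomography

variable {d : ℕ}

lemma A2_mulVec_inl (x : Fin d × Fin d → ℝ) (i : Fin d) (t : Fin 1) :
    (A2 d *ᵥ x) (.inl (i, t)) = ∑ b, x (i, b) := by
  simp only [mulVec, dotProduct, Fintype.sum_prod_type]
  simp [A2, onesRow, one_apply]

lemma A2_mulVec_inr (x : Fin d × Fin d → ℝ) (j : Fin d) (t : Fin 1) :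
    (A2 d *ᵥ x) (.inr (t, j)) = ∑ a, x (a, j) := by
  simp only [mulVec, dotProduct, Fintype.sum_prod_type]
  simp [A2, onesRow, one_apply]

lemma A3_mulVec_inl (x : (Fin d × Fin d) × Fin d → ℝ) (j k : Fin d) (t : Fin 1) :
    (A3 d *ᵥ x) (.inl ((t, j), k)) = ∑ a, x ((a, j), k) := by
  simp only [mulVec, dotProduct, Fintype.sum_prod_type]
  simp [A3, onesRow, one_apply]

lemma A3_mulVec_inr_inl (x : (Fin d × Fin d) × Fin d → ℝ) (i k : Fin d) (t : Fin 1) :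
    (A3 d *ᵥ x) (.inr (.inl ((i, t), k))) = ∑ b, x ((i, b), k) := by
  simp only [mulVec, dotProduct, Fintype.sum_prod_type]
  simp [A3, onesRow, one_apply]

lemma A3_mulVec_inr_inr (x : (Fin d × Fin d) × Fin d → ℝ) (i j : Fin d) (t : Fin 1) :
    (A3 d *ᵥ x) (.inr (.inr ((i, j), t))) = ∑ c, x ((i, j), c) := by
  simp only [mulVec, dotProduct, Fintype.sum_prod_type]
  simp [A3, onesRow, one_apply, ite_and]

lemma one_lt_card_neg_of_A2_mulVec_eq_zero {h : Fin d × Fin d → ℝ} (hA : A2 d *ᵥ h = 0)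
    (hne : h ≠ 0) : 1 < #{p | h p < 0} := by
  have hrow (i : Fin d) : ∑ b, h (i, b) = 0 := by
    simpa [A2_mulVec_inl] using congrFun hA (.inl (i, 0))
  have hcol (j : Fin d) : ∑ a, h (a, j) = 0 := by
    simpa [A2_mulVec_inr] using congrFun hA (.inr (0, j))
  obtain ⟨p, hp⟩ := exists_pos_of_fiber_sums_eq_zero hrow hne
  exact one_lt_card_neg_of_line_sums_eq_zero hcol hrow hp

lemma three_lt_card_neg_of_A3_mulVec_eq_zero {h : (Fin d × Fin d) × Fin d → ℝ}
    (hA : A3 d *ᵥ h = 0) (hne : h ≠ 0) : 3 < #{p | h p < 0} := by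
  have h₁ (j k : Fin d) : ∑ a, h ((a, j), k) = 0 := by
    simpa [A3_mulVec_inl] using congrFun hA (.inl ((0, j), k))
  have h₂ (i k : Fin d) : ∑ b, h ((i, b), k) = 0 := by
    simpa [A3_mulVec_inr_inl] using congrFun hA (.inr (.inl ((i, 0), k)))
  have h₃ (i j : Fin d) : ∑ c, h ((i, j), c) = 0 := by
    simpa [A3_mulVec_inr_inr] using congrFun hA (.inr (.inr ((i, j), 0)))
  obtain ⟨p, hp⟩ := exists_pos_of_fiber_sums_eq_zero (fun ab => h₃ ab.1 ab.2) hne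
  exact three_lt_card_neg_of_line_sums_eq_zero h₁ h₂ h₃ hp

end Tomography

theorem stmt12_general (d : ℕ) :
    (∀ xstar : Fin d × Fin d → ℝ, 0 ≤ xstar →
      (Finset.univ.filter (fun i => xstar i ≠ 0)).card ≤ 2 ^ 1 - 1 →
      {x : Fin d × Fin d → ℝ | (A2 d).mulVec x = (A2 d).mulVec xstar ∧ 0 ≤ x}
        = {xstar}) ∧
    (∀ xstar : (Fin d × Fin d) × Fin d → ℝ, 0 ≤ xstar →
      (Finset.univ.filter (fun i => xstar i ≠ 0)).card ≤ 2 ^ 2 - 1 →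
      {x : (Fin d × Fin d) × Fin d → ℝ |
          (A3 d).mulVec x = (A3 d).mulVec xstar ∧ 0 ≤ x} = {xstar}) :=
  ⟨fun _ hx hs => setOf_mulVec_eq_and_nonneg_eq_singleton
      (fun _ => one_lt_card_neg_of_A2_mulVec_eq_zero) hx hs,
    fun _ hx hs => setOf_mulVec_eq_and_nonneg_eq_singleton
      (fun _ => three_lt_card_neg_of_A3_mulVec_eq_zero) hx hs⟩

/-- for `d ≥ 3`, `D ∈ {2,3}`, every `(2^{D-1} - 1)`-sparse
nonnegative vector `x*` is the unique element of `{x : A_d^D x = A_d^D x*, x ≥ 0}`. -/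
theorem stmt12 (d : ℕ) (hd : 3 ≤ d) :
    (∀ xstar : Fin d × Fin d → ℝ, 0 ≤ xstar →
      (Finset.univ.filter (fun i => xstar i ≠ 0)).card ≤ 2 ^ 1 - 1 →
      {x : Fin d × Fin d → ℝ | (A2 d).mulVec x = (A2 d).mulVec xstar ∧ 0 ≤ x}
        = {xstar}) ∧
    (∀ xstar : (Fin d × Fin d) × Fin d → ℝ, 0 ≤ xstar →
      (Finset.univ.filter (fun i => xstar i ≠ 0)).card ≤ 2 ^ 2 - 1 →
      {x : (Fin d × Fin d) × Fin d → ℝ |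
          (A3 d).mulVec x = (A3 d).mulVec xstar ∧ 0 ≤ x} = {xstar}) :=
  stmt12_general d
end
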